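/- arXiv:2307.03621 — 3 statements merged into one kernel-verified Lean document; each statement's English description precedes it below -/
import Mathlib

section
/- Let X be a real Banach space and let 𝒜 be a compatible collection of bounded subsets of X. Suppose f₀ is an 𝒜-small combination of slice point of B_{X*}. Then for every A ∈ 𝒜 with inf f₀(A) > 0 there exist finitely many closed balls B₁, …, Bₙ in X such that A ⊆ B₁ ∪ ⋯ ∪ Bₙ and 0 ∉ B₁ ∪ ⋯ ∪ Bₙ. -/
open NormedSpace Metric Bornology Set

/-! Let `δ = inf f₀(A)` and take a convex combination `T = ∑ λᵢ Sᵢ ∋ f₀` of slices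
`Sᵢ = S(xᵢ, αᵢ)` with `diam_A T < δ/2`. Over each `Sᵢ` put a closed ball centred far out on the
ray through `xᵢ`, so large that a norming functional of `c - x`, for a point `x` of `A` outside
it, lies in `Sᵢ` and is below `δ/2` at `x`. A point of `A` outside all the balls thus yields, by
convexity of half-spaces, some `g ∈ T` with `g x < δ/2 ≤ f₀ x - δ/2`, against the diameter bound;
`0` is outside each ball because the centre is farther from `0` than the radius. -/

/-- The w*-slice of the closed unit ball of the dual determined by `x ∈ X` and `α > 0`:
`{f ∈ B_{X*} : f x > sup_{g ∈ B_{X*}} g x − α}`. -/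
noncomputable def wStarSlice (X : Type*) [NormedAddCommGroup X] [NormedSpace ℝ X]
    (x : X) (α : ℝ) : Set (StrongDual ℝ X) :=
  {f | ‖f‖ ≤ 1 ∧ sSup ((fun g : StrongDual ℝ X => g x) '' closedBall 0 1) - α < f x}

/-- `T` is a convex combination of w*-slices of `B_{X*}`. -/
noncomputable def IsConvexCombOfWStarSlices (X : Type*) [NormedAddCommGroup X]
    [NormedSpace ℝ X] (T : Set (StrongDual ℝ X)) : Prop :=
  ∃ (n : ℕ) (lam : Fin n → ℝ) (x : Fin n → X) (α : Fin n → ℝ),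
    (∀ i, 0 < lam i) ∧ (∑ i, lam i = 1) ∧ (∀ i, ‖x i‖ = 1) ∧ (∀ i, 0 < α i) ∧
    T = {g | ∃ f : Fin n → StrongDual ℝ X,
          (∀ i, f i ∈ wStarSlice X (x i) (α i)) ∧ g = ∑ i, lam i • f i}

/-- A compatible collection of bounded subsets of `X`. -/
structure IsCompatibleCollection (X : Type*) [NormedAddCommGroup X] [NormedSpace ℝ X]
    (𝒜 : Set (Set X)) : Prop where
  bounded : ∀ A ∈ 𝒜, IsBounded A
  subset_mem : ∀ A ∈ 𝒜, ∀ C ⊆ A, C ∈ 𝒜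
  translate_mem : ∀ A ∈ 𝒜, ∀ x : X, (fun a => a + x) '' A ∈ 𝒜
  union_singleton_mem : ∀ A ∈ 𝒜, ∀ x : X, A ∪ {x} ∈ 𝒜
  closedAbsConvexHull_mem : ∀ A ∈ 𝒜, closure (absConvexHull ℝ A) ∈ 𝒜

/-- `‖f − g‖_A = sup {|f x − g x| : x ∈ A}`. -/
noncomputable def normA (X : Type*) [NormedAddCommGroup X] [NormedSpace ℝ X]
    (A : Set X) (f g : StrongDual ℝ X) : ℝ :=
  sSup ((fun x => |f x - g x|) '' A)

/-- `diam_A T = sup {‖f − g‖_A : f, g ∈ T}`. -/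
noncomputable def diamA (X : Type*) [NormedAddCommGroup X] [NormedSpace ℝ X]
    (A : Set X) (T : Set (StrongDual ℝ X)) : ℝ :=
  sSup {d | ∃ f ∈ T, ∃ g ∈ T, d = normA X A f g}

/-- `f` is an `𝒜`-small combination of slice point of `B_{X*}`: for each `A ∈ 𝒜` and
`ε > 0` there is a convex combination of w*-slices `T` of `B_{X*}` with `f ∈ T` and
`diam_A T < ε`. -/
noncomputable def IsAscsPoint (X : Type*) [NormedAddCommGroup X] [NormedSpace ℝ X]
    (𝒜 : Set (Set X)) (f : StrongDual ℝ X) : Prop :=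
  ∀ A ∈ 𝒜, ∀ ε > 0, ∃ T : Set (StrongDual ℝ X),
    IsConvexCombOfWStarSlices X T ∧ f ∈ T ∧ diamA X A T < ε

section

variable {X : Type*} [NormedAddCommGroup X] [NormedSpace ℝ X]

theorem isGreatest_image_apply_closedBall (x : X) :
    IsGreatest ((fun g : StrongDual ℝ X => g x) '' closedBall 0 1) ‖x‖ := by
  obtain ⟨g, hg, hgx⟩ := exists_dual_vector'' ℝ x
  refine ⟨⟨g, mem_closedBall_zero_iff.2 hg, hgx⟩, ?_⟩
  rintro _ ⟨f, hf, rfl⟩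
  calc f x ≤ ‖f x‖ := le_abs_self _
    _ ≤ 1 * ‖x‖ := f.le_of_opNorm_le (mem_closedBall_zero_iff.1 hf) x
    _ = ‖x‖ := one_mul _

theorem mem_wStarSlice_iff {x : X} {α : ℝ} {f : StrongDual ℝ X} :
    f ∈ wStarSlice X x α ↔ ‖f‖ ≤ 1 ∧ ‖x‖ - α < f x := by
  rw [← (isGreatest_image_apply_closedBall x).csSup_eq]
  rfl

theorem IsConvexCombOfWStarSlices.subset_closedBall {T : Set (StrongDual ℝ X)}
    (hT : IsConvexCombOfWStarSlices X T) : T ⊆ closedBall 0 1 := by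
  obtain ⟨n, lam, x, α, hlam, hsum, -, -, rfl⟩ := hT
  rintro _ ⟨f, hf, rfl⟩
  exact (convex_closedBall 0 1).sum_mem (fun i _ => (hlam i).le) hsum
    fun i _ => mem_closedBall_zero_iff.2 (hf i).1

theorem abs_sub_apply_le_of_norm_le (f g : StrongDual ℝ X) {x : X} {C : ℝ} (hx : ‖x‖ ≤ C) :
    |f x - g x| ≤ ‖f - g‖ * C :=
  calc |f x - g x| = ‖(f - g) x‖ := rfl
    _ ≤ ‖f - g‖ * ‖x‖ := (f - g).le_opNorm x
    _ ≤ ‖f - g‖ * C := by gcongr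

theorem normA_le_of_subset_closedBall (f g : StrongDual ℝ X) {A : Set X} {C : ℝ} (hC : 0 ≤ C)
    (hA : A ⊆ closedBall 0 C) : normA X A f g ≤ ‖f - g‖ * C :=
  Real.sSup_le (by
    rintro _ ⟨x, hx, rfl⟩
    exact abs_sub_apply_le_of_norm_le f g (mem_closedBall_zero_iff.1 (hA hx)))
    (by positivity)

theorem abs_sub_apply_le_normA (f g : StrongDual ℝ X) {A : Set X} (hA : IsBounded A) {x : X}
    (hx : x ∈ A) : |f x - g x| ≤ normA X A f g := by
  obtain ⟨C, -, hAC⟩ := hA.subset_closedBall_lt 0 0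
  refine le_csSup ⟨‖f - g‖ * C, ?_⟩ (mem_image_of_mem _ hx)
  rintro _ ⟨y, hy, rfl⟩
  exact abs_sub_apply_le_of_norm_le f g (mem_closedBall_zero_iff.1 (hAC hy))

theorem normA_le_diamA {A : Set X} {T : Set (StrongDual ℝ X)} (hA : IsBounded A)
    (hT : IsBounded T) {f g : StrongDual ℝ X} (hf : f ∈ T) (hg : g ∈ T) :
    normA X A f g ≤ diamA X A T := by
  obtain ⟨C, hC, hAC⟩ := hA.subset_closedBall_lt 0 0
  obtain ⟨M, -, hTM⟩ := hT.subset_closedBall_lt 0 0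
  refine le_csSup ⟨(M + M) * C, ?_⟩ ⟨f, hf, g, hg, rfl⟩
  rintro _ ⟨f', hf', g', hg', rfl⟩
  calc normA X A f' g' ≤ ‖f' - g'‖ * C := normA_le_of_subset_closedBall f' g' hC.le hAC
    _ ≤ (M + M) * C := by
      gcongr
      exact (norm_sub_le _ _).trans
        (add_le_add (mem_closedBall_zero_iff.1 (hTM hf')) (mem_closedBall_zero_iff.1 (hTM hg')))

theorem sub_apply_le_diamA {A : Set X} {T : Set (StrongDual ℝ X)} (hA : IsBounded A)
    (hT : IsBounded T) {f g : StrongDual ℝ X} (hf : f ∈ T) (hg : g ∈ T) {x : X} (hx : x ∈ A) :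
    f x - g x ≤ diamA X A T :=
  calc f x - g x ≤ |f x - g x| := le_abs_self _
    _ ≤ normA X A f g := abs_sub_apply_le_normA f g hA hx
    _ ≤ diamA X A T := normA_le_diamA hA hT hf hg

theorem exists_mem_wStarSlice_apply_lt {x₀ x : X} {α R t r : ℝ} (hx₀ : ‖x₀‖ = 1) (ht : 0 < t)
    (htα : R + (t - r) ≤ t * α) (hx : ‖x‖ ≤ R) (hxr : r < dist x (t • x₀)) :
    ∃ g ∈ wStarSlice X x₀ α, g x < t - r := by
  obtain ⟨g, hg, hgy⟩ := exists_dual_vector'' ℝ (t • x₀ - x)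
  have hgx₀ : g x₀ ≤ 1 := by
    simpa [hx₀] using (le_abs_self _).trans (g.le_of_opNorm_le hg x₀)
  have hgx : |g x| ≤ R := by
    simpa using (g.le_of_opNorm_le hg x).trans (by simpa using hx)
  have hsep : r < t * g x₀ - g x :=
    calc r < ‖t • x₀ - x‖ := by rwa [dist_comm, dist_eq_norm] at hxr
      _ = t * g x₀ - g x := by simpa using hgy.symm
  refine ⟨g, mem_wStarSlice_iff.2 ⟨hg, ?_⟩, ?_⟩
  · rw [hx₀]
    refine lt_of_mul_lt_mul_left ?_ ht.le
    nlinarith [neg_abs_le (g x)]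
  · nlinarith

theorem IsConvexCombOfWStarSlices.exists_closedBalls {T : Set (StrongDual ℝ X)}
    (hT : IsConvexCombOfWStarSlices X T) {R η : ℝ} (hR : 0 ≤ R) (hη : 0 < η) :
    ∃ (n : ℕ) (c : Fin n → X) (r : Fin n → ℝ), (∀ i, 0 < r i) ∧
      (0 : X) ∉ ⋃ i, closedBall (c i) (r i) ∧
      ∀ x ∈ closedBall (0 : X) R, x ∉ ⋃ i, closedBall (c i) (r i) → ∃ g ∈ T, g x < η := by
  obtain ⟨n, lam, x₀, α, hlam, hsum, hx₀, hα, rfl⟩ := hT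
  set r : Fin n → ℝ := fun i => (R + η) / α i
  have hr (i : Fin n) : 0 < r i := div_pos (by positivity) (hα i)
  have hrα (i : Fin n) : r i * α i = R + η := div_mul_cancel₀ _ (hα i).ne'
  refine ⟨n, fun i => (r i + η) • x₀ i, r, hr, ?_, fun x hx hout => ?_⟩
  · simp only [mem_iUnion, mem_closedBall, dist_zero_left, norm_smul, hx₀, not_exists, not_le]
    intro i
    rw [Real.norm_of_nonneg (by linarith [hr i]), mul_one]
    linarith
  · simp only [mem_iUnion, mem_closedBall, not_exists, not_le] at hout
    have hslice (i : Fin n) : ∃ g ∈ wStarSlice X (x₀ i) (α i), g x < η := by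
      have hαη := mul_pos hη (hα i)
      simpa using exists_mem_wStarSlice_apply_lt (hx₀ i) (by linarith [hr i])
        (by nlinarith [hrα i]) (mem_closedBall_zero_iff.1 hx) (hout i)
    choose g hg hgx using hslice
    refine ⟨∑ i, lam i • g i, ⟨g, hg, rfl⟩, ?_⟩
    exact (convex_halfSpace_lt (f := fun g : StrongDual ℝ X => g x)
      ⟨fun _ _ => rfl, fun _ _ => rfl⟩ η).sum_mem (fun i _ => (hlam i).le) hsum fun i _ => hgx i

end

theorem Ascs_point_ball_separation_general
    (X : Type*) [NormedAddCommGroup X] [NormedSpace ℝ X]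
    (𝒜 : Set (Set X)) (h𝒜 : IsCompatibleCollection X 𝒜)
    (f₀ : StrongDual ℝ X) (hf₀ : IsAscsPoint X 𝒜 f₀) :
    ∀ A ∈ 𝒜, 0 < sInf (⇑f₀ '' A) →
      ∃ (n : ℕ) (c : Fin n → X) (r : Fin n → ℝ), (∀ i, 0 < r i) ∧
        A ⊆ ⋃ i, closedBall (c i) (r i) ∧
        (0 : X) ∉ ⋃ i, closedBall (c i) (r i) := by
  intro A hA hδ
  have hAb := h𝒜.bounded A hA
  obtain ⟨R, hR, hAR⟩ := hAb.subset_closedBall_lt 0 0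
  obtain ⟨T, hT, hf₀T, hdiam⟩ := hf₀ A hA _ (half_pos hδ)
  obtain ⟨n, c, r, hr, h0, hsmall⟩ := hT.exists_closedBalls hR.le (half_pos hδ)
  refine ⟨n, c, r, hr, fun x hx => ?_, h0⟩
  by_contra hout
  obtain ⟨g, hgT, hgx⟩ := hsmall x (hAR hx) hout
  have hf₀x : sInf (⇑f₀ '' A) ≤ f₀ x :=
    csInf_le (f₀.lipschitz.isBounded_image hAb).bddBelow (mem_image_of_mem _ hx)
  have hdist := sub_apply_le_diamA hAb (isBounded_closedBall.subset hT.subset_closedBall)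
    hf₀T hgT hx
  linarith

theorem Ascs_point_ball_separation
    (X : Type*) [NormedAddCommGroup X] [NormedSpace ℝ X] [CompleteSpace X]
    (𝒜 : Set (Set X)) (h𝒜 : IsCompatibleCollection X 𝒜)
    (f₀ : StrongDual ℝ X) (hf₀ : IsAscsPoint X 𝒜 f₀) :
    ∀ A ∈ 𝒜, 0 < sInf (⇑f₀ '' A) →
      ∃ (n : ℕ) (c : Fin n → X) (r : Fin n → ℝ), (∀ i, 0 < r i) ∧
        A ⊆ ⋃ i, closedBall (c i) (r i) ∧
        (0 : X) ∉ ⋃ i, closedBall (c i) (r i) :=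
  Ascs_point_ball_separation_general X 𝒜 h𝒜 f₀ hf₀
end

section
/- Let X be a real Banach space and let 𝒜 be a compatible collection of bounded subsets of X. If the linear span of the 𝒜-small combination of slice points of B_{X*} is τ_𝒜-dense in X* (i.e., for every f ∈ X*, every A ∈ 𝒜 and every ε > 0 there exist scalars λ₁, …, λₙ and 𝒜-scs points f₁, …, fₙ of B_{X*} with sup_{x ∈ A} |f(x) − Σᵢ₌₁ⁿ λᵢ fᵢ(x)| < ε), then every closed bounded convex subset of X belonging to 𝒜 is ball generated. -/
open NormedSpace Metric Bornology Set

/-- A bounded set `C ⊆ X` is ball generated if it is the intersection of a family of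
sets, each of which is a finite union of closed balls. -/
noncomputable def IsBallGenerated (X : Type*) [NormedAddCommGroup X] [NormedSpace ℝ X]
    (C : Set X) : Prop :=
  ∃ 𝒢 : Set (Set X),
    (∀ F ∈ 𝒢, ∃ (n : ℕ) (c : Fin n → X) (r : Fin n → ℝ),
      (∀ j, 0 < r j) ∧ F = ⋃ j, closedBall (c j) (r j)) ∧
    C = ⋂₀ 𝒢

/- ======================= auxiliary lemmas ======================= -/

lemma sSup_eval_closedBall (X : Type*) [NormedAddCommGroup X] [NormedSpace ℝ X] (x : X) :
    sSup ((fun g : StrongDual ℝ X => g x) '' closedBall 0 1) = ‖x‖ := by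
  have hub : ∀ v ∈ ((fun g : StrongDual ℝ X => g x) '' closedBall 0 1), v ≤ ‖x‖ := by
    rintro v ⟨g, hg, rfl⟩
    rw [mem_closedBall_zero_iff] at hg
    calc (g x : ℝ) ≤ ‖g x‖ := le_abs_self _
      _ ≤ ‖g‖ * ‖x‖ := g.le_opNorm x
      _ ≤ 1 * ‖x‖ := mul_le_mul_of_nonneg_right hg (norm_nonneg x)
      _ = ‖x‖ := one_mul _
  apply le_antisymm
  · exact Real.sSup_le hub (norm_nonneg x)
  · rcases eq_or_ne x 0 with rfl | hx
    · have h0 : (0 : ℝ) ∈ ((fun g : StrongDual ℝ X => g (0:X)) '' closedBall 0 1) :=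
        ⟨0, by simp, by simp⟩
      simpa using le_csSup ⟨‖(0:X)‖, hub⟩ h0
    · obtain ⟨g, hg1, hgx⟩ := exists_dual_vector ℝ x (norm_ne_zero_iff.mpr hx)
      have hgx' : g x = ‖x‖ := by exact_mod_cast hgx
      rw [← hgx']
      exact le_csSup ⟨‖x‖, hub⟩ ⟨g, by simp [mem_closedBall_zero_iff, hg1.le], rfl⟩

lemma slice_functional_of_not_mem_ball
    {X : Type*} [NormedAddCommGroup X] [NormedSpace ℝ X]
    {x z y : X} (hx : ‖x‖ = 1) {α η M r s : ℝ} (hη : 0 < η)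
    (hy : ‖y‖ ≤ M) (hz : ‖z‖ ≤ M) (hs : s = 1 ∨ s = -1)
    (hr1 : ‖z‖ + η + M + 1 ≤ r) (hr2 : ‖z‖ + η + M < r * α)
    (hout : y ∉ closedBall (-((s*r) • x)) (‖z + (s*r) • x‖ - η)) :
    ∃ h : StrongDual ℝ X, h ∈ wStarSlice X x α ∧ s * h z - η ≤ s * h y := by
  have hM0 : (0:ℝ) ≤ M := (norm_nonneg z).trans hz
  have hr0 : (0:ℝ) < r := by nlinarith [norm_nonneg z]
  have habs : |s| = 1 := by rcases hs with rfl | rfl <;> norm_num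
  have hss : s * s = 1 := by rcases hs with rfl | rfl <;> norm_num
  set b := (s*r) • x with hb
  have hnb : ‖b‖ = r := by
    rw [hb, norm_smul, Real.norm_eq_abs, abs_mul, habs, abs_of_pos hr0, hx]
    ring
  have hzb : r - ‖z‖ ≤ ‖z + b‖ := by
    have h1 : ‖b‖ ≤ ‖z + b‖ + ‖z‖ := by
      have := norm_add_le (z + b) (-z)
      simpa using this
    linarith [hnb ▸ h1]
  have hout' : ‖z + b‖ - η < ‖y + b‖ := by
    rw [mem_closedBall, dist_eq_norm, sub_neg_eq_add] at hout
    linarith [not_le.mp hout]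
  set w := y + b with hw
  have hwpos : 0 < ‖w‖ := by linarith
  have hwne : w ≠ 0 := by
    intro h; rw [h] at hwpos; simp at hwpos
  obtain ⟨h₀, hh1, hh2⟩ := exists_dual_vector ℝ w (norm_ne_zero_iff.mpr hwne)
  have hh2' : h₀ w = ‖w‖ := by exact_mod_cast hh2
  have hy0 : h₀ y ≤ M := by
    calc h₀ y ≤ |h₀ y| := le_abs_self _
      _ = ‖h₀ y‖ := (Real.norm_eq_abs _).symm
      _ ≤ ‖h₀‖ * ‖y‖ := h₀.le_opNorm y
      _ ≤ M := by rw [hh1]; linarith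
  have hzb0 : h₀ (z + b) ≤ ‖z + b‖ := by
    calc h₀ (z + b) ≤ |h₀ (z+b)| := le_abs_self _
      _ = ‖h₀ (z+b)‖ := (Real.norm_eq_abs _).symm
      _ ≤ ‖h₀‖ * ‖z + b‖ := h₀.le_opNorm _
      _ = ‖z + b‖ := by rw [hh1, one_mul]
  have e1 : h₀ w = h₀ y + (s*r) * h₀ x := by
    rw [hw, hb, map_add, map_smul, smul_eq_mul]
  have e2 : h₀ (z + b) = h₀ z + (s*r) * h₀ x := by
    rw [hb, map_add, map_smul, smul_eq_mul]
  set t := h₀ x with ht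
  have hst : 1 - α < s * t := by
    have key : r * (s * t) > r * (1 - α) := by nlinarith [hh2', hout', hzb]
    exact (mul_lt_mul_iff_right₀ hr0).mp key
  refine ⟨s • h₀, ⟨?_, ?_⟩, ?_⟩
  · rw [norm_smul, Real.norm_eq_abs, habs, hh1]; norm_num
  · rw [sSup_eval_closedBall, hx]
    have hv : (s • h₀) x = s * t := by simp [ht]
    rw [hv]; linarith
  · have hy2 : h₀ z - η ≤ h₀ y := by nlinarith [hh2', hout', hzb0]
    have hzv : s * (s • h₀) z = h₀ z := by
      simp [smul_eq_mul, ← mul_assoc, hss]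
    have hyv : s * (s • h₀) y = h₀ y := by
      simp [smul_eq_mul, ← mul_assoc, hss]
    rw [hzv, hyv]; linarith

lemma abs_apply_le_sSup {X : Type*} [NormedAddCommGroup X] [NormedSpace ℝ X]
    (f g : StrongDual ℝ X) {A : Set X} {M : ℝ}
    (hA : ∀ x ∈ A, ‖x‖ ≤ M) {a : X} (ha : a ∈ A) :
    |f a - g a| ≤ sSup ((fun x => |f x - g x|) '' A) := by
  have hM : (0:ℝ) ≤ M := (norm_nonneg a).trans (hA a ha)
  apply le_csSup
  · refine ⟨(‖f‖ + ‖g‖) * M, ?_⟩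
    rintro v ⟨x, hxA, rfl⟩
    calc |f x - g x| = ‖(f - g) x‖ := by simp [Real.norm_eq_abs]
      _ ≤ ‖f - g‖ * ‖x‖ := (f - g).le_opNorm x
      _ ≤ (‖f‖ + ‖g‖) * M :=
          mul_le_mul (norm_sub_le f g) (hA x hxA) (norm_nonneg x) (by positivity)
  · exact ⟨a, ha, rfl⟩

lemma normA_le_diamA' {X : Type*} [NormedAddCommGroup X] [NormedSpace ℝ X]
    {A : Set X} {M : ℝ} (hM : 0 ≤ M) (hA : ∀ x ∈ A, ‖x‖ ≤ M)
    {T : Set (StrongDual ℝ X)} (hT : ∀ u ∈ T, ‖u‖ ≤ 1) {p q : StrongDual ℝ X}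
    (hp : p ∈ T) (hq : q ∈ T) :
    normA X A p q ≤ diamA X A T := by
  apply le_csSup
  · refine ⟨2 * M, ?_⟩
    rintro d ⟨u, hu, v, hv, rfl⟩
    unfold normA
    apply Real.sSup_le
    · rintro w ⟨x, hxA, rfl⟩
      calc |u x - v x| = ‖(u - v) x‖ := by simp [Real.norm_eq_abs]
        _ ≤ ‖u - v‖ * ‖x‖ := (u - v).le_opNorm x
        _ ≤ 2 * M := by
            have h1 : ‖u - v‖ ≤ 2 := by
              have := norm_sub_le u v; have := hT u hu; have := hT v hv; linarith
            exact mul_le_mul h1 (hA x hxA) (norm_nonneg x) (by norm_num)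
    · positivity
  · exact ⟨p, hp, q, hq, rfl⟩

lemma norm_le_one_of_mem_comb {X : Type*} [NormedAddCommGroup X] [NormedSpace ℝ X]
    {n : ℕ} {lam : Fin n → ℝ} {x : Fin n → X} {α : Fin n → ℝ}
    (hlam : ∀ i, 0 < lam i) (hsum : ∑ i, lam i = 1)
    {u : StrongDual ℝ X} (hu : ∃ f : Fin n → StrongDual ℝ X,
      (∀ i, f i ∈ wStarSlice X (x i) (α i)) ∧ u = ∑ i, lam i • f i) :
    ‖u‖ ≤ 1 := by
  obtain ⟨f, hf, rfl⟩ := hu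
  calc ‖∑ i, lam i • f i‖ ≤ ∑ i, ‖lam i • f i‖ := norm_sum_le _ _
    _ ≤ ∑ i, lam i := by
        apply Finset.sum_le_sum; intro i _
        rw [norm_smul, Real.norm_eq_abs, abs_of_pos (hlam i)]
        exact mul_le_of_le_one_right (hlam i).le (hf i).1
    _ = 1 := hsum

/- ======================= main theorem ======================= -/

theorem ballGenerated_of_span_Ascs_points_dense
    (X : Type*) [NormedAddCommGroup X] [NormedSpace ℝ X] [CompleteSpace X]
    (𝒜 : Set (Set X)) (h𝒜 : IsCompatibleCollection X 𝒜)
    (hdense : ∀ f : StrongDual ℝ X, ∀ A ∈ 𝒜, ∀ ε > 0,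
      ∃ (n : ℕ) (lam : Fin n → ℝ) (g : Fin n → StrongDual ℝ X),
        (∀ i, IsAscsPoint X 𝒜 (g i)) ∧
        sSup ((fun x => |f x - (∑ i, lam i • g i) x|) '' A) < ε) :
    ∀ C ∈ 𝒜, IsClosed C → IsBounded C → Convex ℝ C → IsBallGenerated X C := by
  intro C hC hclosed hbdd hconv
  obtain ⟨R, hR⟩ := hbdd.subset_closedBall 0
  have key : ∀ z : X, ∃ F : Set X,
      (∃ (n : ℕ) (c : Fin n → X) (r : Fin n → ℝ),
        (∀ j, 0 < r j) ∧ F = ⋃ j, closedBall (c j) (r j)) ∧ C ⊆ F ∧ (z ∉ C → z ∉ F) := by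
    intro z
    by_cases hzC : z ∈ C
    · refine ⟨closedBall 0 (|R| + 1),
        ⟨1, fun _ => 0, fun _ => |R| + 1, fun _ => by positivity, (Set.iUnion_const _).symm⟩,
        hR.trans (closedBall_subset_closedBall (by linarith [le_abs_self R])),
        fun h => absurd hzC h⟩
    · -- main construction
      set A : Set X := C ∪ {z} with hAdef
      have hA𝒜 : A ∈ 𝒜 := h𝒜.union_singleton_mem C hC z
      have hzA : z ∈ A := Or.inr rfl
      obtain ⟨M, hMball⟩ := (h𝒜.bounded A hA𝒜).subset_closedBall 0
      have hMA : ∀ a ∈ A, ‖a‖ ≤ M := fun a ha => mem_closedBall_zero_iff.mp (hMball ha)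
      have hzM : ‖z‖ ≤ M := hMA z hzA
      have hM0 : (0:ℝ) ≤ M := (norm_nonneg z).trans hzM
      obtain ⟨f, u, hfu, hzu⟩ := geometric_hahn_banach_closed_point hconv hclosed hzC
      set ε := (f z - u) / 3 with hεdef
      have hε0 : 0 < ε := by rw [hεdef]; linarith
      have hfz3 : f z - u = 3 * ε := by rw [hεdef]; ring
      obtain ⟨n, lam, g, hg, happrox⟩ := hdense f A hA𝒜 ε hε0
      set Λ := ∑ i, |lam i| with hΛdef
      have hΛ0 : 0 ≤ Λ := Finset.sum_nonneg fun i _ => abs_nonneg _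
      set δ := ε / (4 * (Λ + 1)) with hδdef
      have hδ0 : 0 < δ := by rw [hδdef]; positivity
      have hscs : ∀ i, ∃ T, IsConvexCombOfWStarSlices X T ∧ g i ∈ T ∧ diamA X A T < δ :=
        fun i => hg i A hA𝒜 δ hδ0
      choose T hTcomb hgT hTdiam using hscs
      choose m μ xs αs hμpos hμsum hxs hαs hTeq using hTcomb
      set s : Fin n → ℝ := fun i => if 0 ≤ lam i then 1 else -1 with hsdef
      have hsval : ∀ i, s i = 1 ∨ s i = -1 := fun i => by
        by_cases h : 0 ≤ lam i
        · left; simp [hsdef, h]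
        · right; simp [hsdef, h]
      set K := ‖z‖ + δ + M + 1 with hKdef
      have hK0 : 0 < K := by rw [hKdef]; positivity
      set S := ∑ p : (i : Fin n) × Fin (m i), (αs p.1 p.2)⁻¹ with hSdef
      have hS0 : 0 ≤ S :=
        Finset.sum_nonneg fun p _ => inv_nonneg.mpr (hαs p.1 p.2).le
      set r := K * (1 + S) with hrdef
      have hrK : K ≤ r := le_mul_of_one_le_right hK0.le (by linarith)
      have hr0 : 0 < r := lt_of_lt_of_le hK0 hrK
      have hr1 : ‖z‖ + δ + M + 1 ≤ r := by rw [← hKdef]; exact hrK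
      have hrα : ∀ (i : Fin n) (j : Fin (m i)), ‖z‖ + δ + M < r * αs i j := by
        intro i j
        have hαij := hαs i j
        have hsingle : (αs i j)⁻¹ ≤ S := by
          rw [hSdef]
          exact Finset.single_le_sum
            (f := fun p : (i : Fin n) × Fin (m i) => (αs p.1 p.2)⁻¹)
            (fun p _ => inv_nonneg.mpr (hαs p.1 p.2).le) (Finset.mem_univ ⟨i, j⟩)
        have hKr : K ≤ r * αs i j := by
          have h1 : K * ((αs i j)⁻¹ * αs i j) ≤ K * ((1 + S) * αs i j) := by
            apply mul_le_mul_of_nonneg_left _ hK0.le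
            apply mul_le_mul_of_nonneg_right _ hαij.le
            linarith
          rw [inv_mul_cancel₀ (ne_of_gt hαij), mul_one] at h1
          calc K ≤ K * ((1+S) * αs i j) := h1
            _ = r * αs i j := by rw [hrdef]; ring
        rw [hKdef] at hKr
        linarith
      set ctr : (i : Fin n) × Fin (m i) → X :=
        fun p => -((s p.1 * r) • xs p.1 p.2) with hctr
      set rad : (i : Fin n) × Fin (m i) → ℝ :=
        fun p => ‖z + (s p.1 * r) • xs p.1 p.2‖ - δ with hrad
      have habs1 : ∀ i, |s i| = 1 := fun i => by
        rcases hsval i with h | h <;> rw [h] <;> norm_num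
      have hnormge : ∀ p : (i : Fin n) × Fin (m i),
          r - ‖z‖ ≤ ‖z + (s p.1 * r) • xs p.1 p.2‖ := by
        intro p
        have hnb : ‖(s p.1 * r) • xs p.1 p.2‖ = r := by
          rw [norm_smul, Real.norm_eq_abs, abs_mul, habs1, abs_of_pos hr0, hxs p.1 p.2]
          ring
        have h1 : ‖(s p.1 * r) • xs p.1 p.2‖ ≤ ‖z + (s p.1 * r) • xs p.1 p.2‖ + ‖z‖ := by
          have := norm_add_le (z + (s p.1 * r) • xs p.1 p.2) (-z)
          simpa using this
        rw [hnb] at h1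
        linarith
      have hradpos : ∀ p, 0 < rad p := by
        intro p
        have h1 := hnormge p
        simp only [hrad]
        linarith
      refine ⟨⋃ p : (i : Fin n) × Fin (m i), closedBall (ctr p) (rad p), ?_, ?_, fun _ => ?_⟩
      · refine ⟨Fintype.card ((i : Fin n) × Fin (m i)),
          fun k => ctr ((Fintype.equivFin _).symm k),
          fun k => rad ((Fintype.equivFin _).symm k),
          fun k => hradpos _, ?_⟩
        ext w
        simp only [mem_iUnion]
        constructor
        · rintro ⟨p, hp⟩
          exact ⟨(Fintype.equivFin _) p, by simpa using hp⟩
        · rintro ⟨k, hk⟩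
          exact ⟨(Fintype.equivFin _).symm k, hk⟩
      · -- C ⊆ F
        intro y hyC
        by_contra hyF
        simp only [mem_iUnion, not_exists] at hyF
        have hyA : y ∈ A := Or.inl hyC
        have hyM : ‖y‖ ≤ M := hMA y hyA
        have hsel : ∀ (i : Fin n) (j : Fin (m i)), ∃ h : StrongDual ℝ X,
            h ∈ wStarSlice X (xs i j) (αs i j) ∧ s i * h z - δ ≤ s i * h y := by
          intro i j
          apply slice_functional_of_not_mem_ball (hxs i j) hδ0 hyM hzM (hsval i) hr1 (hrα i j)
          have := hyF ⟨i, j⟩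
          simpa [hctr, hrad] using this
        choose h' hh's hh'i using hsel
        set g' : Fin n → StrongDual ℝ X := fun i => ∑ j, μ i j • h' i j with hg'def
        have hg'T : ∀ i, g' i ∈ T i := by
          intro i; rw [hTeq i]; exact ⟨h' i, fun j => hh's i j, rfl⟩
        have happly : ∀ (i : Fin n) (a : X), g' i a = ∑ j, μ i j * h' i j a := by
          intro i a
          simp [hg'def, ContinuousLinearMap.sum_apply, ContinuousLinearMap.smul_apply,
            smul_eq_mul]
        have hstep : ∀ i, s i * (g' i) z - δ ≤ s i * (g' i) y := by
          intro i
          have e1 : s i * (g' i) y = ∑ j, μ i j * (s i * h' i j y) := by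
            rw [happly, Finset.mul_sum]
            exact Finset.sum_congr rfl fun j _ => by ring
          have e2 : s i * (g' i) z = ∑ j, μ i j * (s i * h' i j z) := by
            rw [happly, Finset.mul_sum]
            exact Finset.sum_congr rfl fun j _ => by ring
          have e3 : ∑ j, μ i j * (s i * h' i j z - δ)
              = (∑ j, μ i j * (s i * h' i j z)) - δ := by
            simp only [mul_sub]
            rw [Finset.sum_sub_distrib, ← Finset.sum_mul, hμsum i, one_mul]
          rw [e1, e2, ← e3]
          apply Finset.sum_le_sum
          intro j _
          exact mul_le_mul_of_nonneg_left (hh'i i j) (hμpos i j).le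
        have hlam_step : ∀ i, lam i * (g' i) z - |lam i| * δ ≤ lam i * (g' i) y := by
          intro i
          rcases le_or_gt 0 (lam i) with hpos | hneg
          · have hsi : s i = 1 := by simp [hsdef, hpos]
            have hst := hstep i
            rw [hsi, one_mul, one_mul] at hst
            rw [abs_of_nonneg hpos]
            have h6 := mul_le_mul_of_nonneg_left hst hpos
            rw [mul_sub] at h6
            linarith
          · have hsi : s i = -1 := by simp [hsdef, not_le.mpr hneg]
            have hst := hstep i
            rw [hsi] at hst
            have h4 : (g' i) y ≤ (g' i) z + δ := by linarith
            rw [abs_of_neg hneg]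
            have h5 := mul_le_mul_of_nonpos_left h4 hneg.le
            rw [mul_add] at h5
            linarith
        have hTnorm : ∀ i, ∀ v ∈ T i, ‖v‖ ≤ 1 := by
          intro i v hv
          rw [hTeq i] at hv
          exact norm_le_one_of_mem_comb (hμpos i) (hμsum i) hv
        have hclose : ∀ i, ∀ a ∈ A, |g i a - g' i a| ≤ δ := by
          intro i a ha
          have h1 : |g i a - g' i a| ≤ normA X A (g i) (g' i) :=
            abs_apply_le_sSup (g i) (g' i) hMA ha
          have h2 : normA X A (g i) (g' i) ≤ diamA X A (T i) :=
            normA_le_diamA' hM0 hMA (hTnorm i) (hgT i) (hg'T i)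
          linarith [hTdiam i]
        have hφ : ∀ a : X, (∑ i, lam i • g i) a = ∑ i, lam i * g i a := by
          intro a
          simp [ContinuousLinearMap.sum_apply, ContinuousLinearMap.smul_apply, smul_eq_mul]
        have hfy : |f y - ∑ i, lam i * g i y| < ε := by
          have := lt_of_le_of_lt (abs_apply_le_sSup f (∑ i, lam i • g i) hMA hyA) happrox
          rwa [hφ y] at this
        have hfz : |f z - ∑ i, lam i * g i z| < ε := by
          have := lt_of_le_of_lt (abs_apply_le_sSup f (∑ i, lam i • g i) hMA hzA) happrox
          rwa [hφ z] at this
        have hA1 : (∑ i, lam i * g' i z) - Λ * δ ≤ ∑ i, lam i * g' i y := by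
          have h1 : ∑ i, (lam i * g' i z - |lam i| * δ) ≤ ∑ i, lam i * g' i y :=
            Finset.sum_le_sum fun i _ => hlam_step i
          have h2 : ∑ i, (lam i * g' i z - |lam i| * δ)
              = (∑ i, lam i * g' i z) - Λ * δ := by
            rw [Finset.sum_sub_distrib, ← Finset.sum_mul, hΛdef]
          linarith [h2 ▸ h1]
        have hA2 : ∀ a ∈ A, |(∑ i, lam i * g i a) - ∑ i, lam i * g' i a| ≤ Λ * δ := by
          intro a ha
          have h1 : (∑ i, lam i * g i a) - ∑ i, lam i * g' i a
              = ∑ i, lam i * (g i a - g' i a) := by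
            rw [← Finset.sum_sub_distrib]
            exact Finset.sum_congr rfl fun i _ => by ring
          rw [h1]
          calc |∑ i, lam i * (g i a - g' i a)| ≤ ∑ i, |lam i * (g i a - g' i a)| :=
                Finset.abs_sum_le_sum_abs _ _
            _ ≤ ∑ i, |lam i| * δ := by
                apply Finset.sum_le_sum; intro i _
                rw [abs_mul]
                exact mul_le_mul_of_nonneg_left (hclose i a ha) (abs_nonneg _)
            _ = Λ * δ := by rw [← Finset.sum_mul, hΛdef]
        have hΛδ : Λ * δ ≤ ε / 4 := by
          have hpos : (0:ℝ) < 4 * (Λ + 1) := by positivity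
          rw [hδdef, ← mul_div_assoc, div_le_div_iff₀ hpos (by norm_num : (0:ℝ) < 4)]
          nlinarith [hε0, hΛ0]
        have hgy : f y < u := hfu y hyC
        have l1 := abs_lt.mp hfy
        have l2 := abs_lt.mp hfz
        have l3 := abs_le.mp (hA2 y hyA)
        have l4 := abs_le.mp (hA2 z hzA)
        linarith [l1.1, l1.2, l2.1, l2.2, l3.1, l3.2, l4.1, l4.2, hA1, hΛδ, hε0, hfz3, hgy]
      · -- z ∉ F
        intro hzF
        simp only [mem_iUnion] at hzF
        obtain ⟨p, hp⟩ := hzF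
        rw [mem_closedBall, dist_eq_norm] at hp
        simp only [hctr, hrad, sub_neg_eq_add] at hp
        linarith
  choose F hF1 hF2 hF3 using key
  refine ⟨Set.range F, by rintro _ ⟨z, rfl⟩; exact hF1 z, ?_⟩
  apply Set.Subset.antisymm
  · intro w hw
    rw [mem_sInter]
    rintro _ ⟨z, rfl⟩
    exact hF2 z hw
  · intro w hw
    by_contra hwC
    exact hF3 w hwC (mem_sInter.mp hw (F w) ⟨w, rfl⟩)
end

section
/- Let X be a real Banach space, let S₁, …, Sₙ be w*-slices of B_{X*}, let λ₁, …, λₙ > 0 with Σᵢ₌₁ⁿ λᵢ = 1, and let T = Σᵢ₌₁ⁿ λᵢ Sᵢ = {Σᵢ₌₁ⁿ λᵢ fᵢ : fᵢ ∈ Sᵢ}. Let C ⊆ X be a set such that inf_{x ∈ C} g(x) > 0 for every g ∈ T. Then C = ⋃ᵢ₌₁ⁿ Cᵢ, where Cᵢ = {x ∈ C : f(x) > 0 for all f ∈ Sᵢ}. -/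
open NormedSpace Metric Bornology Set

/-- `sInf` of a set unbounded below is the junk value `0`, so a positive infimum forces boundedness. -/
theorem Real.pos_of_mem_of_sInf_pos {s : Set ℝ} {a : ℝ} (hs : 0 < sInf s) (ha : a ∈ s) :
    0 < a := by
  have hbdd : BddBelow s := by
    by_contra hbdd
    rw [Real.sInf_of_not_bddBelow hbdd] at hs
    exact hs.ne rfl
  exact hs.trans_le (csInf_le hbdd ha)

theorem sum_smul_apply_nonpos {X ι : Type*} [NormedAddCommGroup X] [NormedSpace ℝ X]
    {s : Finset ι} {lam : ι → ℝ} {f : ι → StrongDual ℝ X} {y : X}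
    (hlam : ∀ i ∈ s, 0 ≤ lam i) (hf : ∀ i ∈ s, f i y ≤ 0) :
    (∑ i ∈ s, lam i • f i) y ≤ 0 := by
  rw [sum_apply]
  exact Finset.sum_nonpos fun i hi => mul_nonpos_of_nonneg_of_nonpos (hlam i hi) (hf i hi)

theorem exists_forall_pos_of_forall_sum_smul_pos {X ι : Type*} [NormedAddCommGroup X]
    [NormedSpace ℝ X] [Fintype ι] {S : ι → Set (StrongDual ℝ X)} {lam : ι → ℝ} {y : X}
    (hlam : ∀ i, 0 ≤ lam i) (hpos : ∀ f : ι → StrongDual ℝ X, (∀ i, f i ∈ S i) →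
      0 < (∑ i, lam i • f i) y) :
    ∃ i, ∀ f ∈ S i, 0 < f y := by
  by_contra! hneg
  choose f hfS hfy using hneg
  exact (hpos f hfS).not_ge (sum_smul_apply_nonpos (fun i _ => hlam i) (fun i _ => hfy i))

theorem convex_comb_of_slices_cover_general
    (X : Type*) [NormedAddCommGroup X] [NormedSpace ℝ X]
    (n : ℕ) (x : Fin n → X) (α lam : Fin n → ℝ)
    (hlam : ∀ i, 0 < lam i)
    (T : Set (StrongDual ℝ X))
    (hT : T = {g | ∃ f : Fin n → StrongDual ℝ X,
      (∀ i, f i ∈ wStarSlice X (x i) (α i)) ∧ g = ∑ i, lam i • f i})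
    (C : Set X) (hC : ∀ g ∈ T, 0 < sInf (⇑g '' C)) :
    C = ⋃ i, {y ∈ C | ∀ f ∈ wStarSlice X (x i) (α i), 0 < f y} := by
  refine Subset.antisymm (fun y hy => ?_) (iUnion_subset fun i => sep_subset _ _)
  have hpos : ∀ f : Fin n → StrongDual ℝ X, (∀ i, f i ∈ wStarSlice X (x i) (α i)) →
      0 < (∑ i, lam i • f i) y := fun f hf =>
    Real.pos_of_mem_of_sInf_pos (hC _ (hT ▸ ⟨f, hf, rfl⟩)) (mem_image_of_mem _ hy)
  obtain ⟨i, hi⟩ := exists_forall_pos_of_forall_sum_smul_pos (fun i => (hlam i).le) hpos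
  exact mem_iUnion.2 ⟨i, hy, hi⟩

theorem convex_comb_of_slices_cover
    (X : Type*) [NormedAddCommGroup X] [NormedSpace ℝ X] [CompleteSpace X]
    (n : ℕ) (x : Fin n → X) (α lam : Fin n → ℝ)
    (hx : ∀ i, ‖x i‖ = 1) (hα : ∀ i, 0 < α i)
    (hlam : ∀ i, 0 < lam i) (hsum : ∑ i, lam i = 1)
    (T : Set (StrongDual ℝ X))
    (hT : T = {g | ∃ f : Fin n → StrongDual ℝ X,
      (∀ i, f i ∈ wStarSlice X (x i) (α i)) ∧ g = ∑ i, lam i • f i})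
    (C : Set X) (hC : ∀ g ∈ T, 0 < sInf (⇑g '' C)) :
    C = ⋃ i, {y ∈ C | ∀ f ∈ wStarSlice X (x i) (α i), 0 < f y} :=
  convex_comb_of_slices_cover_general X n x α lam hlam T hT C hC
end
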